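/- Let −3 < ϱ < 0, let b₀ : [−1,1] → [0,∞) be measurable with b₀(s) ≤ C₀·max(s,0) for all s and some C₀ > 0, let q > 0 and 0 < θ ≤ 2 (with 0 < q < 1 when θ = 2), let ϑ ≥ 0 and l ≥ 0. Then there exist C > 0 and δ > 0, independent of t, ε and χ, such that for every 0 < ε ≤ 1, every measurable χ : [0,∞) → [0,1] with χ(s) = 0 for s ≤ ε and χ(s) = 1 for s ≥ 2ε, every bounded measurable h : ℝ³ → ℝ, every t ≥ 0 and every v ∈ ℝ³: (1+|v|²)^{l/2} w_{q,θ,ϑ}(t,v) |K^{1−χ}(g)(v)| ≤ C ε^{ϱ+3} e^{−δ|v|²} · sup_{u∈ℝ³} |h(u)|, where g(u) = h(u)/((1+|u|²)^{l/2} w_{q,θ,ϑ}(t,u)). -/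

import Mathlib

open MeasureTheory

noncomputable section

/-- Velocity space `ℝ³`. -/
abbrev V3 : Type := EuclideanSpace ℝ (Fin 3)

/-- Normalized global Maxwellian `μ(v) = (2π)⁻¹ e^{-|v|²/2}`. -/
def maxwellian (v : V3) : ℝ := (2 * Real.pi)⁻¹ * Real.exp (-‖v‖ ^ 2 / 2)

/-- Post-collisional velocity `v′ = v + ((u-v)·ω)ω`. -/
def vPost (u v ω : V3) : V3 := v + (inner ℝ (u - v) ω : ℝ) • ω

/-- Post-collisional velocity `u′ = u - ((u-v)·ω)ω`. -/
def uPost (u v ω : V3) : V3 := u - (inner ℝ (u - v) ω : ℝ) • ω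

/-- Time–velocity weight `w_{q,θ,ϑ}(t,v) = exp(q|v|^θ/8 + q|v|^θ/(8(1+t)^ϑ))`. -/
def wt (q θ ϑ t : ℝ) (v : V3) : ℝ :=
  Real.exp (q * ‖v‖ ^ θ / 8 + q * ‖v‖ ^ θ / (8 * (1 + t) ^ ϑ))

/-- Surface measure on the unit sphere `S² ⊂ ℝ³`. -/
def sphMeasure : Measure (Metric.sphere (0 : V3) 1) := (volume : Measure V3).toSphere

/-- Nonlinear Boltzmann collision operator in the perturbation variable,
`Γ(f₁,f₂)(v) = ∫∫ |v-u|^ϱ b₀(cos θ) √μ(u) [f₁(u′)f₂(v′) - f₁(u)f₂(v)] dω du`. -/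
def GamOp (ϱ : ℝ) (b₀ : ℝ → ℝ) (f₁ f₂ : V3 → ℝ) (v : V3) : ℝ :=
  ∫ u : V3, ∫ ω : Metric.sphere (0 : V3) 1,
      ‖v - u‖ ^ ϱ * b₀ ((inner ℝ (ω : V3) (u - v) : ℝ) / ‖u - v‖) *
        Real.sqrt (maxwellian u) *
        (f₁ (uPost u v (ω : V3)) * f₂ (vPost u v (ω : V3)) - f₁ u * f₂ v) ∂sphMeasure


/-- Near-singularity part `K^{1-χ}` of the linearized collision operator, for a
radial cutoff `χ`. -/
def K1mChi (ϱ : ℝ) (b₀ χ : ℝ → ℝ) (f : V3 → ℝ) (v : V3) : ℝ :=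
  ∫ u : V3, ∫ ω : Metric.sphere (0 : V3) 1,
      (1 - χ ‖u - v‖) * ‖u - v‖ ^ ϱ *
        b₀ ((inner ℝ (ω : V3) (u - v) : ℝ) / ‖u - v‖) * Real.sqrt (maxwellian u) *
        (f (uPost u v (ω : V3)) * Real.sqrt (maxwellian (vPost u v (ω : V3)))
          + f (vPost u v (ω : V3)) * Real.sqrt (maxwellian (uPost u v (ω : V3)))
          - f u * Real.sqrt (maxwellian v)) ∂sphMeasure

/-
On the support of `1 - χ` we have `|u - v| < 2ε`, so the singular kernel `|u - v|^ϱ` is only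
integrated over a ball of radius `2ε`; in polar coordinates this costs `(2ε)^(ϱ+3)/(ϱ+3)`, finite
because `ϱ > -3`. Everything else is bounded: the weights are `≥ 1`, so `|g| ≤ ‖h‖_∞`, the gain-loss
bracket is at most `3 (2π)^{-1/2} ‖h‖_∞`, and `b₀ ≤ C₀` at cosines. The remaining factor `√μ(u)` is
at most `(2π)^{-1/2} e^{|v| - |v|²/4}` because `|u - v| ≤ 2`, and this Gaussian beats the weight
`⟨v⟩^l w(t,v) ≤ ⟨v⟩^l e^{q|v|^θ/4}` since `q|v|^θ ≤ η|v|² + c` with `η < 1`.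
-/

open Metric Set

theorem indicator_ball_comp_sub {E : Type*} [SeminormedAddCommGroup E] (F : E → ℝ) (v : E)
    (R : ℝ) :
    (ball v R).indicator (fun u => F (u - v)) = fun u => (ball 0 R).indicator F (u - v) := by
  ext u
  simp only [indicator, mem_ball_iff_norm, sub_zero]

section Polar

variable {E : Type*} [NormedAddCommGroup E] [NormedSpace ℝ E] [FiniteDimensional ℝ E]
  [MeasurableSpace E] [BorelSpace E] (μ : Measure E) [μ.IsAddHaarMeasure]

theorem integrableOn_ball_rpow_norm_sub (hd : 1 ≤ Module.finrank ℝ E) {ϱ : ℝ}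
    (hϱ : -(Module.finrank ℝ E : ℝ) < ϱ) (v : E) (R : ℝ) :
    IntegrableOn (fun u => ‖u - v‖ ^ ϱ) (ball v R) μ := by
  have h0 : IntegrableOn (fun x : E => ‖x‖ ^ ϱ) (ball 0 R) μ :=
    integrableOn_ball_of_norm_le_rpow (C := 1) (α := -ϱ) hd (by linarith)
      (.of_forall fun x => by simp [abs_of_nonneg, Real.rpow_nonneg])
      (measurable_norm.pow_const ϱ).aestronglyMeasurable
  rw [← integrable_indicator_iff measurableSet_ball,
    indicator_ball_comp_sub (‖·‖ ^ ϱ)]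
  exact ((integrable_indicator_iff measurableSet_ball).2 h0).comp_sub_right v

theorem setIntegral_ball_rpow_norm_sub (hd : 1 ≤ Module.finrank ℝ E) {ϱ : ℝ}
    (hϱ : -(Module.finrank ℝ E : ℝ) < ϱ) (v : E) {R : ℝ} (hR : 0 ≤ R) :
    ∫ u in ball v R, ‖u - v‖ ^ ϱ ∂μ =
      μ.toSphere.real univ * (R ^ (ϱ + Module.finrank ℝ E) / (ϱ + Module.finrank ℝ E)) := by
  have : Nontrivial E := Module.nontrivial_of_finrank_pos (R := ℝ) hd
  set d := Module.finrank ℝ E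
  have hradial : ∫ y in Ioi (0 : ℝ), y ^ (d - 1) • (Iio R).indicator (· ^ ϱ) y =
      R ^ (ϱ + d) / (ϱ + d) := by
    calc ∫ y in Ioi (0 : ℝ), y ^ (d - 1) • (Iio R).indicator (· ^ ϱ) y
        = ∫ y in Ioo 0 R, y ^ (ϱ + d - 1) := by
          rw [← Ioi_inter_Iio, ← setIntegral_indicator measurableSet_Iio]
          refine setIntegral_congr_fun measurableSet_Ioi fun y (hy : 0 < y) => ?_
          by_cases hyR : y < R
          · simp only [indicator_of_mem (show y ∈ Iio R from hyR), smul_eq_mul]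
            rw [← Real.rpow_natCast, Nat.cast_sub hd, ← Real.rpow_add hy]
            ring_nf
          · simp [hyR]
      _ = R ^ (ϱ + d) / (ϱ + d) := by
          rw [← integral_Ioc_eq_integral_Ioo, ← intervalIntegral.integral_of_le hR,
            integral_rpow (Or.inl (by linarith)), sub_add_cancel,
            Real.zero_rpow (by linarith), sub_zero]
  rw [← integral_indicator measurableSet_ball, indicator_ball_comp_sub (‖·‖ ^ ϱ),
    integral_sub_right_eq_self (fun x => (ball 0 R).indicator (‖·‖ ^ ϱ) x) v]
  have hball : (ball (0 : E) R).indicator (‖·‖ ^ ϱ) = fun x => (Iio R).indicator (· ^ ϱ) ‖x‖ := by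
    ext x; simp [indicator]
  rw [hball, integral_fun_norm_addHaar μ, hradial, μ.toSphere_real_apply_univ]
  simp [nsmul_eq_mul, smul_eq_mul, mul_assoc]

end Polar

section Weight

theorem exists_mul_rpow_le_mul_sq_add {q θ η : ℝ} (hq : 0 ≤ q) (hθ₀ : 0 ≤ θ) (hθ : θ < 2)
    (hη : 0 < η) : ∃ c, ∀ x : ℝ, 0 ≤ x → q * x ^ θ ≤ η * x ^ 2 + c := by
  set R := (q / η) ^ (2 - θ)⁻¹
  have hR : 0 ≤ R := by positivity
  refine ⟨q * R ^ θ, fun x hx => ?_⟩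
  rcases le_or_gt x R with hxR | hRx
  · have : q * x ^ θ ≤ q * R ^ θ := by gcongr
    nlinarith [sq_nonneg x]
  · have hx0 : 0 < x := hR.trans_lt hRx
    have hRpow : q / η ≤ x ^ (2 - θ) := by
      calc q / η = R ^ (2 - θ) := by
            rw [← Real.rpow_mul (by positivity), inv_mul_cancel₀ (by linarith), Real.rpow_one]
        _ ≤ x ^ (2 - θ) := by gcongr
    have hsplit : x ^ 2 = x ^ (2 - θ) * x ^ θ := by
      rw [← Real.rpow_add hx0, sub_add_cancel, Real.rpow_two]
    have : q * x ^ θ ≤ η * x ^ 2 := by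
      rw [hsplit, ← mul_assoc]
      gcongr
      rwa [div_le_iff₀' hη] at hRpow
    linarith [mul_nonneg hq (Real.rpow_nonneg hR θ)]

theorem exists_mul_rpow_le_sq_add {q θ : ℝ} (hq : 0 < q) (hθ₁ : 0 < θ) (hθ₂ : θ ≤ 2)
    (hqθ : θ = 2 → q < 1) : ∃ η < 1, ∃ c, ∀ x : ℝ, 0 ≤ x → q * x ^ θ ≤ η * x ^ 2 + c := by
  rcases hθ₂.lt_or_eq with hθ | rfl
  · exact ⟨1 / 2, by norm_num, exists_mul_rpow_le_mul_sq_add hq.le hθ₁.le hθ (by norm_num)⟩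
  · exact ⟨q, hqθ rfl, 0, fun x _ => by rw [Real.rpow_two, add_zero]⟩

theorem one_add_sq_rpow_le_exp {l x : ℝ} (hl : 0 ≤ l) (hx : 0 ≤ x) :
    (1 + x ^ 2) ^ (l / 2) ≤ Real.exp (l * x) := by
  have h : 1 + x ^ 2 ≤ Real.exp (2 * x) := by
    rw [two_mul, Real.exp_add]
    nlinarith [Real.add_one_le_exp x]
  calc (1 + x ^ 2) ^ (l / 2) ≤ Real.exp (2 * x) ^ (l / 2) := by gcongr
    _ = Real.exp (l * x) := by rw [← Real.exp_mul]; ring_nf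

theorem exists_rpow_mul_exp_le_gaussian {q θ l : ℝ} (hq : 0 < q) (hθ₁ : 0 < θ) (hθ₂ : θ ≤ 2)
    (hqθ : θ = 2 → q < 1) (hl : 0 ≤ l) :
    ∃ δ C : ℝ, 0 < δ ∧ 0 < C ∧ ∀ x : ℝ, 0 ≤ x →
      (1 + x ^ 2) ^ (l / 2) * Real.exp (q * x ^ θ / 4 + x - x ^ 2 / 4) ≤
        C * Real.exp (-δ * x ^ 2) := by
  obtain ⟨η, hη, c, hc⟩ := exists_mul_rpow_le_sq_add hq hθ₁ hθ₂ hqθ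
  set δ := (1 - η) / 8
  have hδ : 0 < δ := by simp only [δ]; linarith
  refine ⟨δ, Real.exp (c / 4 + (l + 1) ^ 2 / (4 * δ)), hδ, Real.exp_pos _, fun x hx => ?_⟩
  have hlin : (l + 1) * x ≤ δ * x ^ 2 + (l + 1) ^ 2 / (4 * δ) := by
    rw [← sub_nonneg, show δ * x ^ 2 + (l + 1) ^ 2 / (4 * δ) - (l + 1) * x =
      (2 * δ * x - (l + 1)) ^ 2 / (4 * δ) by field_simp; ring]
    positivity
  calc (1 + x ^ 2) ^ (l / 2) * Real.exp (q * x ^ θ / 4 + x - x ^ 2 / 4)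
      ≤ Real.exp (l * x) * Real.exp (q * x ^ θ / 4 + x - x ^ 2 / 4) := by
        gcongr; exact one_add_sq_rpow_le_exp hl hx
    _ ≤ Real.exp (c / 4 + (l + 1) ^ 2 / (4 * δ) + -δ * x ^ 2) := by
        rw [← Real.exp_add]
        exact Real.exp_le_exp.2 (by
          linarith [hc x hx, show δ * x ^ 2 = (1 - η) / 8 * x ^ 2 from rfl])
    _ = _ := Real.exp_add _ _

theorem one_le_wt {q θ ϑ t : ℝ} (hq : 0 ≤ q) (ht : 0 ≤ t) (v : V3) : 1 ≤ wt q θ ϑ t v := by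
  have : 0 < (1 + t) ^ ϑ := by positivity
  exact Real.one_le_exp (by positivity)

theorem wt_le_exp {q θ ϑ t : ℝ} (hq : 0 ≤ q) (ht : 0 ≤ t) (hϑ : 0 ≤ ϑ) (v : V3) :
    wt q θ ϑ t v ≤ Real.exp (q * ‖v‖ ^ θ / 4) := by
  have h1 : 1 ≤ (1 + t) ^ ϑ := Real.one_le_rpow (by linarith) hϑ
  have h2 : q * ‖v‖ ^ θ / (8 * (1 + t) ^ ϑ) ≤ q * ‖v‖ ^ θ / 8 := by
    gcongr; linarith
  unfold wt
  gcongr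
  linarith

theorem abs_div_weight_le {q θ ϑ t l M : ℝ} {h : V3 → ℝ} (hq : 0 ≤ q) (ht : 0 ≤ t)
    (hl : 0 ≤ l) (hM : ∀ u, |h u| ≤ M) (u : V3) :
    |h u / ((1 + ‖u‖ ^ 2) ^ (l / 2) * wt q θ ϑ t u)| ≤ M := by
  have hweight : 1 ≤ (1 + ‖u‖ ^ 2) ^ (l / 2) * wt q θ ϑ t u :=
    one_le_mul_of_one_le_of_one_le (Real.one_le_rpow (by nlinarith) (by linarith))
      (one_le_wt hq ht u)
  rw [abs_div, abs_of_pos (zero_lt_one.trans_le hweight)]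
  exact (div_le_self (abs_nonneg _) hweight).trans (hM u)

theorem exists_weight_mul_exp_le_gaussian {q θ ϑ l : ℝ} (hq : 0 < q) (hθ₁ : 0 < θ)
    (hθ₂ : θ ≤ 2) (hqθ : θ = 2 → q < 1) (hϑ : 0 ≤ ϑ) (hl : 0 ≤ l) :
    ∃ δ C : ℝ, 0 < δ ∧ 0 < C ∧ ∀ t : ℝ, 0 ≤ t → ∀ v : V3,
      (1 + ‖v‖ ^ 2) ^ (l / 2) * wt q θ ϑ t v * Real.exp (‖v‖ - ‖v‖ ^ 2 / 4) ≤
        C * Real.exp (-δ * ‖v‖ ^ 2) := by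
  obtain ⟨δ, C, hδ, hC, hbound⟩ := exists_rpow_mul_exp_le_gaussian hq hθ₁ hθ₂ hqθ hl
  refine ⟨δ, C, hδ, hC, fun t ht v => ?_⟩
  calc (1 + ‖v‖ ^ 2) ^ (l / 2) * wt q θ ϑ t v * Real.exp (‖v‖ - ‖v‖ ^ 2 / 4)
      ≤ (1 + ‖v‖ ^ 2) ^ (l / 2) * Real.exp (q * ‖v‖ ^ θ / 4) * Real.exp (‖v‖ - ‖v‖ ^ 2 / 4) := by
        gcongr; exact wt_le_exp hq.le ht hϑ v
    _ = (1 + ‖v‖ ^ 2) ^ (l / 2) * Real.exp (q * ‖v‖ ^ θ / 4 + ‖v‖ - ‖v‖ ^ 2 / 4) := by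
        rw [mul_assoc, ← Real.exp_add, add_sub_assoc]
    _ ≤ C * Real.exp (-δ * ‖v‖ ^ 2) := hbound ‖v‖ (norm_nonneg v)

end Weight

section Maxwellian

theorem sqrt_maxwellian (u : V3) :
    Real.sqrt (maxwellian u) = Real.sqrt (2 * Real.pi)⁻¹ * Real.exp (-‖u‖ ^ 2 / 4) := by
  rw [maxwellian, Real.sqrt_mul (by positivity), show -‖u‖ ^ 2 / 2 = -‖u‖ ^ 2 / 4 + -‖u‖ ^ 2 / 4 by
    ring, Real.exp_add, Real.sqrt_mul_self (Real.exp_nonneg _)]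

theorem sqrt_maxwellian_le (u : V3) : Real.sqrt (maxwellian u) ≤ Real.sqrt (2 * Real.pi)⁻¹ := by
  rw [sqrt_maxwellian]
  exact mul_le_of_le_one_right (Real.sqrt_nonneg _) (Real.exp_le_one_iff.2 (by nlinarith))

theorem sqrt_maxwellian_le_of_norm_sub_le {u v : V3} (huv : ‖u - v‖ ≤ 2) :
    Real.sqrt (maxwellian u) ≤ Real.sqrt (2 * Real.pi)⁻¹ * Real.exp (‖v‖ - ‖v‖ ^ 2 / 4) := by
  have hv : ‖v‖ ≤ ‖u‖ + 2 := by
    have := norm_sub_norm_le v u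
    rw [norm_sub_rev] at this
    linarith
  rw [sqrt_maxwellian]
  gcongr
  rcases le_or_gt ‖v‖ 2 with h | h
  · nlinarith [norm_nonneg u, norm_nonneg v]
  · nlinarith [norm_nonneg u]

theorem abs_collision_bracket_le {f : V3 → ℝ} {M : ℝ} (hf : ∀ u, |f u| ≤ M) (a b c d e v : V3) :
    |f a * Real.sqrt (maxwellian b) + f c * Real.sqrt (maxwellian d)
        - f e * Real.sqrt (maxwellian v)| ≤ 3 * (Real.sqrt (2 * Real.pi)⁻¹ * M) := by
  have hterm : ∀ x y : V3, |f x * Real.sqrt (maxwellian y)| ≤ Real.sqrt (2 * Real.pi)⁻¹ * M :=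
    fun x y => by
      rw [abs_mul, abs_of_nonneg (Real.sqrt_nonneg _), mul_comm]
      exact mul_le_mul (sqrt_maxwellian_le y) (hf x) (abs_nonneg _) (Real.sqrt_nonneg _)
  calc _ ≤ |f a * Real.sqrt (maxwellian b) + f c * Real.sqrt (maxwellian d)|
        + |f e * Real.sqrt (maxwellian v)| := abs_sub _ _
    _ ≤ |f a * Real.sqrt (maxwellian b)| + |f c * Real.sqrt (maxwellian d)|
        + |f e * Real.sqrt (maxwellian v)| := by gcongr; exact abs_add_le _ _
    _ ≤ _ := by linarith [hterm a b, hterm c d, hterm e v]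

end Maxwellian

theorem real_inner_div_norm_le_one {F : Type*} [NormedAddCommGroup F] [InnerProductSpace ℝ F]
    {ω : F} (hω : ‖ω‖ = 1) (x : F) : inner ℝ ω x / ‖x‖ ≤ 1 := by
  simpa [hω] using (abs_le.1 (abs_real_inner_div_norm_mul_norm_le_one ω x)).2

theorem abs_K1mChi_integrand_le {ϱ B R M : ℝ} {b₀ χ : ℝ → ℝ} {f : V3 → ℝ}
    (hb₀ : ∀ s, 0 ≤ b₀ s) (hb₀B : ∀ s ≤ 1, b₀ s ≤ B) (hχ : ∀ s, 0 ≤ χ s ∧ χ s ≤ 1)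
    (hR₂ : R ≤ 2) (hχR : ∀ s, R ≤ s → χ s = 1) (hf : ∀ u, |f u| ≤ M)
    (u v : V3) (ω : sphere (0 : V3) 1) :
    |(1 - χ ‖u - v‖) * ‖u - v‖ ^ ϱ * b₀ (inner ℝ (ω : V3) (u - v) / ‖u - v‖) *
        Real.sqrt (maxwellian u) *
        (f (uPost u v ω) * Real.sqrt (maxwellian (vPost u v ω))
          + f (vPost u v ω) * Real.sqrt (maxwellian (uPost u v ω))
          - f u * Real.sqrt (maxwellian v))| ≤
      (ball v R).indicator (fun u => ‖u - v‖ ^ ϱ) u *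
        (3 * B * (2 * Real.pi)⁻¹ * Real.exp (‖v‖ - ‖v‖ ^ 2 / 4) * M) := by
  by_cases hu : u ∈ ball v R
  · have huv : ‖u - v‖ ≤ 2 := (mem_ball_iff_norm.1 hu).le.trans hR₂
    have hcut : |1 - χ ‖u - v‖| ≤ 1 :=
      abs_le.2 ⟨by linarith [hχ ‖u - v‖], by linarith [hχ ‖u - v‖]⟩
    have hb₀u := hb₀B _ (real_inner_div_norm_le_one (norm_eq_of_mem_sphere ω) (u - v))
    have hsqrtμ := sqrt_maxwellian_le_of_norm_sub_le huv
    have hbracket := abs_collision_bracket_le hf (uPost u v ω) (vPost u v ω)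
      (vPost u v ω) (uPost u v ω) u v
    have hB : 0 ≤ B := (hb₀ 0).trans (hb₀B 0 zero_le_one)
    have hP := Real.mul_self_sqrt (inv_nonneg.2 (by positivity : (0 : ℝ) ≤ 2 * Real.pi))
    rw [indicator_of_mem hu, abs_mul, abs_mul, abs_mul, abs_mul,
      abs_of_nonneg (Real.rpow_nonneg (norm_nonneg _) _), abs_of_nonneg (hb₀ _),
      abs_of_nonneg (Real.sqrt_nonneg _)]
    calc _ ≤ 1 * ‖u - v‖ ^ ϱ * B * (Real.sqrt (2 * Real.pi)⁻¹ * Real.exp (‖v‖ - ‖v‖ ^ 2 / 4)) *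
          (3 * (Real.sqrt (2 * Real.pi)⁻¹ * M)) := by
          gcongr
          exact hb₀ _
      _ = _ := by
          linear_combination 3 * ‖u - v‖ ^ ϱ * B * Real.exp (‖v‖ - ‖v‖ ^ 2 / 4) * M * hP
  · have hχ1 : χ ‖u - v‖ = 1 := hχR _ (by simpa [mem_ball_iff_norm, dist_eq_norm] using hu)
    simp [indicator_of_notMem hu, hχ1]

instance isFiniteMeasure_sphMeasure : IsFiniteMeasure sphMeasure := by
  unfold sphMeasure; infer_instance

theorem abs_K1mChi_le {ϱ B R M : ℝ} {b₀ χ : ℝ → ℝ} {f : V3 → ℝ} (hϱ : -3 < ϱ)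
    (hb₀ : ∀ s, 0 ≤ b₀ s) (hb₀B : ∀ s ≤ 1, b₀ s ≤ B) (hχ : ∀ s, 0 ≤ χ s ∧ χ s ≤ 1)
    (hR : 0 ≤ R) (hR₂ : R ≤ 2) (hχR : ∀ s, R ≤ s → χ s = 1) (hf : ∀ u, |f u| ≤ M) (v : V3) :
    |K1mChi ϱ b₀ χ f v| ≤ sphMeasure.real univ ^ 2 * (R ^ (ϱ + 3) / (ϱ + 3)) *
      (3 * B * (2 * Real.pi)⁻¹) * Real.exp (‖v‖ - ‖v‖ ^ 2 / 4) * M := by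
  have hd : Module.finrank ℝ V3 = 3 := finrank_euclideanSpace_fin
  have hϱd : -(Module.finrank ℝ V3 : ℝ) < ϱ := by rw [hd]; exact_mod_cast hϱ
  have hint := integrableOn_ball_rpow_norm_sub volume (by rw [hd]; norm_num) hϱd v R
  have hball := setIntegral_ball_rpow_norm_sub volume (by rw [hd]; norm_num) hϱd v hR
  rw [hd, Nat.cast_ofNat] at hball
  rw [← Real.norm_eq_abs, K1mChi]
  refine (norm_integral_le_of_norm_le (g := fun u => (ball v R).indicator (‖· - v‖ ^ ϱ) u *
      (3 * B * (2 * Real.pi)⁻¹ * Real.exp (‖v‖ - ‖v‖ ^ 2 / 4) * M) * sphMeasure.real univ)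
    (((integrable_indicator_iff measurableSet_ball).2 hint).mul_const _ |>.mul_const _)
    (.of_forall fun u => ?_)).trans (le_of_eq ?_)
  · exact norm_integral_le_of_norm_le_const
      (.of_forall (abs_K1mChi_integrand_le hb₀ hb₀B hχ hR₂ hχR hf u v))
  · rw [integral_mul_const, integral_mul_const, integral_indicator measurableSet_ball, hball]
    simp only [sphMeasure]
    ring

theorem sphMeasure_real_univ_pos : 0 < sphMeasure.real univ := by
  rw [sphMeasure, Measure.toSphere_real_apply_univ, finrank_euclideanSpace_fin]
  have : 0 < volume.real (ball (0 : V3) 1) :=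
    ENNReal.toReal_pos (measure_ball_pos volume 0 one_pos).ne' measure_ball_lt_top.ne
  positivity

theorem K_one_minus_chi_smallness_general
    (ϱ : ℝ) (hϱ₁ : -3 < ϱ)
    (b₀ : ℝ → ℝ) (hb₀nonneg : ∀ s, 0 ≤ b₀ s)
    (C₀ : ℝ) (hC₀ : 0 < C₀) (hb₀le : ∀ s, b₀ s ≤ C₀ * max s 0)
    (q θ ϑ l : ℝ) (hq : 0 < q) (hθ₁ : 0 < θ) (hθ₂ : θ ≤ 2)
    (hqθ : θ = 2 → q < 1) (hϑ : 0 ≤ ϑ) (hl : 0 ≤ l) :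
    ∃ C δ : ℝ, 0 < C ∧ 0 < δ ∧
      ∀ ε : ℝ, 0 < ε → ε ≤ 1 →
        ∀ χ : ℝ → ℝ, Measurable χ →
          (∀ s, 0 ≤ χ s ∧ χ s ≤ 1) →
          (∀ s, s ≤ ε → χ s = 0) → (∀ s, 2 * ε ≤ s → χ s = 1) →
          ∀ h : V3 → ℝ, Measurable h →
            ∀ M : ℝ, (∀ u : V3, |h u| ≤ M) →
              ∀ t : ℝ, 0 ≤ t → ∀ v : V3,
                (1 + ‖v‖ ^ 2) ^ (l / 2) * wt q θ ϑ t v *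
                    |K1mChi ϱ b₀ χ
                      (fun u => h u / ((1 + ‖u‖ ^ 2) ^ (l / 2) * wt q θ ϑ t u)) v| ≤
                  C * ε ^ (ϱ + 3) * Real.exp (-δ * ‖v‖ ^ 2) * M := by
  obtain ⟨δ, Cw, hδ, hCw, hweight⟩ := exists_weight_mul_exp_le_gaussian hq hθ₁ hθ₂ hqθ hϑ hl
  have hS := sphMeasure_real_univ_pos
  have hϱ3 : 0 < ϱ + 3 := by linarith
  refine ⟨sphMeasure.real univ ^ 2 * (2 ^ (ϱ + 3) / (ϱ + 3)) * (3 * C₀ * (2 * Real.pi)⁻¹) * Cw,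
    δ, by positivity, hδ, ?_⟩
  intro ε hε hε₁ χ _ hχ _ hχ₁ h _ M hM t ht v
  have hb₀C₀ : ∀ s ≤ 1, b₀ s ≤ C₀ := fun s hs =>
    (hb₀le s).trans (mul_le_of_le_one_right hC₀.le (max_le hs zero_le_one))
  have hK := abs_K1mChi_le hϱ₁ hb₀nonneg hb₀C₀ hχ (by positivity) (by linarith) hχ₁
    (abs_div_weight_le (θ := θ) (ϑ := ϑ) hq.le ht hl hM) v
  have hW : 0 ≤ (1 + ‖v‖ ^ 2) ^ (l / 2) * wt q θ ϑ t v :=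
    mul_nonneg (by positivity) (zero_le_one.trans (one_le_wt hq.le ht v))
  have hM₀ : 0 ≤ M := (abs_nonneg _).trans (hM 0)
  calc _ ≤ (1 + ‖v‖ ^ 2) ^ (l / 2) * wt q θ ϑ t v * _ := mul_le_mul_of_nonneg_left hK hW
    _ = sphMeasure.real univ ^ 2 * (2 ^ (ϱ + 3) / (ϱ + 3)) * (3 * C₀ * (2 * Real.pi)⁻¹) *
          ε ^ (ϱ + 3) * M * ((1 + ‖v‖ ^ 2) ^ (l / 2) * wt q θ ϑ t v *
            Real.exp (‖v‖ - ‖v‖ ^ 2 / 4)) := by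
        rw [Real.mul_rpow zero_le_two hε.le]
        ring
    _ ≤ sphMeasure.real univ ^ 2 * (2 ^ (ϱ + 3) / (ϱ + 3)) * (3 * C₀ * (2 * Real.pi)⁻¹) *
          ε ^ (ϱ + 3) * M * (Cw * Real.exp (-δ * ‖v‖ ^ 2)) :=
        mul_le_mul_of_nonneg_left (hweight t ht v) (by positivity)
    _ = _ := by ring

/-- Smallness of the near-singularity part `K^{1-χ}` (Lemma 2.2, (2.5)):
`⟨v⟩^l w K^{1-χ}(h/(⟨·⟩^l w)) ≤ C ε^{ϱ+3} e^{-δ|v|²} ‖h‖_∞`. -/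
theorem K_one_minus_chi_smallness
    (ϱ : ℝ) (hϱ₁ : -3 < ϱ) (hϱ₂ : ϱ < 0)
    (b₀ : ℝ → ℝ) (hb₀meas : Measurable b₀) (hb₀nonneg : ∀ s, 0 ≤ b₀ s)
    (C₀ : ℝ) (hC₀ : 0 < C₀) (hb₀le : ∀ s, b₀ s ≤ C₀ * max s 0)
    (q θ ϑ l : ℝ) (hq : 0 < q) (hθ₁ : 0 < θ) (hθ₂ : θ ≤ 2)
    (hqθ : θ = 2 → q < 1) (hϑ : 0 ≤ ϑ) (hl : 0 ≤ l) :
    ∃ C δ : ℝ, 0 < C ∧ 0 < δ ∧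
      ∀ ε : ℝ, 0 < ε → ε ≤ 1 →
        ∀ χ : ℝ → ℝ, Measurable χ →
          (∀ s, 0 ≤ χ s ∧ χ s ≤ 1) →
          (∀ s, s ≤ ε → χ s = 0) → (∀ s, 2 * ε ≤ s → χ s = 1) →
          ∀ h : V3 → ℝ, Measurable h →
            ∀ M : ℝ, (∀ u : V3, |h u| ≤ M) →
              ∀ t : ℝ, 0 ≤ t → ∀ v : V3,
                (1 + ‖v‖ ^ 2) ^ (l / 2) * wt q θ ϑ t v *
                    |K1mChi ϱ b₀ χ
                      (fun u => h u / ((1 + ‖u‖ ^ 2) ^ (l / 2) * wt q θ ϑ t u)) v| ≤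
                  C * ε ^ (ϱ + 3) * Real.exp (-δ * ‖v‖ ^ 2) * M :=
  K_one_minus_chi_smallness_general ϱ hϱ₁ b₀ hb₀nonneg C₀ hC₀ hb₀le q θ ϑ l hq hθ₁ hθ₂ hqθ hϑ hl
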